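/- Let G : ℝ^m → ℝ^n with nonempty zero set Z, x ∈ ℝ^m, H ∈ ℝ^{n×m} of full rank (n < m) with ‖H⁺‖ ≤ Ω, and let 𝓐 = {w | G(x) + H(w − x) = 0} and y = proj_𝓐 x. Suppose z̄ ∈ Z. Then ‖z̄ − proj_𝓐 z̄‖ ≤ Ω · ‖G(x) − H(x − z̄)‖. -/

import Mathlib

/-- Moore–Penrose pseudo-inverse of a full-rank wide matrix: `H⁺ = Hᵀ (H Hᵀ)⁻¹`. -/
noncomputable def Matrix.pinv {n m : ℕ} (A : Matrix (Fin n) (Fin m) ℝ) :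
    Matrix (Fin m) (Fin n) ℝ :=
  A.transpose * (A * A.transpose)⁻¹

/-- Reinterpret a plain vector in `Fin k → ℝ` as a point of Euclidean space. -/
def toE {k : ℕ} (v : Fin k → ℝ) : EuclideanSpace ℝ (Fin k) := WithLp.toLp 2 v

/-!
Full rank gives `H H⁺ = 1`, so `w = z̄ − H⁺ (G x + H (z̄ − x))` solves the linearized equation.
The projection of `z̄` onto `𝓐` is at least as close to `z̄` as `w`, hence
`‖z̄ − proj_𝓐 z̄‖ ≤ ‖H⁺ (G x − H (x − z̄))‖ ≤ Ω ‖G x − H (x − z̄)‖`.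
-/

open Matrix

theorem Matrix.isUnit_of_rank_eq_card {ι K : Type*} [Fintype ι] [DecidableEq ι] [Field K]
    (A : Matrix ι ι K) (h : A.rank = Fintype.card ι) : IsUnit A := by
  rw [← mulVec_surjective_iff_isUnit]
  change Function.Surjective A.mulVecLin
  rw [← LinearMap.range_eq_top]
  exact Submodule.eq_top_of_finrank_eq (by rwa [Module.finrank_fintype_fun_eq_card])

theorem Matrix.mul_pinv_of_rank_eq {n m : ℕ} {H : Matrix (Fin n) (Fin m) ℝ} (h : H.rank = n) :
    H * H.pinv = 1 := by
  have hunit : IsUnit (H * Hᵀ) :=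
    isUnit_of_rank_eq_card _ (by rw [rank_self_mul_transpose, h, Fintype.card_fin])
  rw [pinv, ← Matrix.mul_assoc, mul_nonsing_inv _ ((isUnit_iff_isUnit_det _).mp hunit)]

theorem linearized_eq_zero_of_sub_pinv {n m : ℕ} {H : Matrix (Fin n) (Fin m) ℝ}
    (hH : H * H.pinv = 1) (b : EuclideanSpace ℝ (Fin n)) (x z : EuclideanSpace ℝ (Fin m)) :
    b + toE (H *ᵥ (z - toE (H.pinv *ᵥ (b + toE (H *ᵥ (z - x)))) - x)) = 0 := by
  simp only [toE, WithLp.ofLp_toLp, sub_right_comm _ _ x.ofLp, mulVec_sub, mulVec_mulVec, hH,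
    one_mulVec]
  ext i
  simp

theorem stmt_13_general {n m : ℕ}
    (G : EuclideanSpace ℝ (Fin m) → EuclideanSpace ℝ (Fin n))
    (x : EuclideanSpace ℝ (Fin m))
    (H : Matrix (Fin n) (Fin m) ℝ) (hrank : H.rank = n) (Ω : ℝ)
    (hΩ : ∀ v : EuclideanSpace ℝ (Fin n), ‖toE (H.pinv.mulVec v)‖ ≤ Ω * ‖v‖)
    (zbar : EuclideanSpace ℝ (Fin m))
    (q : EuclideanSpace ℝ (Fin m))
    (hqmin : ∀ w : EuclideanSpace ℝ (Fin m), G x + toE (H.mulVec (w - x)) = 0 →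
      ‖zbar - q‖ ≤ ‖zbar - w‖) :
    ‖zbar - q‖ ≤ Ω * ‖G x - toE (H.mulVec (x - zbar))‖ := by
  have hr : G x + toE (H *ᵥ (zbar - x)) = G x - toE (H *ᵥ (x - zbar)) := by
    rw [← neg_sub zbar.ofLp, mulVec_neg, toE, toE, WithLp.toLp_neg, sub_neg_eq_add]
  set r := G x + toE (H *ᵥ (zbar - x))
  calc ‖zbar - q‖ ≤ ‖zbar - (zbar - toE (H.pinv *ᵥ r))‖ :=
        hqmin _ (linearized_eq_zero_of_sub_pinv (mul_pinv_of_rank_eq hrank) _ _ _)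
    _ = ‖toE (H.pinv *ᵥ r)‖ := by rw [sub_sub_cancel]
    _ ≤ Ω * ‖r‖ := hΩ r
    _ = Ω * ‖G x - toE (H *ᵥ (x - zbar))‖ := by rw [hr]

/-- let `G : ℝ^m → ℝ^n` have nonempty zero set `Z`, `x ∈ ℝ^m`,
`H ∈ ℝ^{n×m}` of full rank (`n < m`) with `‖H⁺‖ ≤ Ω`, and let
`𝓐 = {w | G(x) + H(w − x) = 0}`.  If `z̄ ∈ Z` and `q = proj_𝓐 z̄` is the Euclidean
projection of `z̄` onto `𝓐`, then `‖z̄ − q‖ ≤ Ω·‖G(x) − H(x − z̄)‖`. -/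
theorem stmt_13 {n m : ℕ} (hnm : n < m)
    (G : EuclideanSpace ℝ (Fin m) → EuclideanSpace ℝ (Fin n))
    (Z : Set (EuclideanSpace ℝ (Fin m))) (hZ : Z = {z | G z = 0}) (hZne : Z.Nonempty)
    (x : EuclideanSpace ℝ (Fin m))
    (H : Matrix (Fin n) (Fin m) ℝ) (hrank : H.rank = n) (Ω : ℝ)
    (hΩ : ∀ v : EuclideanSpace ℝ (Fin n), ‖toE (H.pinv.mulVec v)‖ ≤ Ω * ‖v‖)
    (zbar : EuclideanSpace ℝ (Fin m)) (hzbar : zbar ∈ Z)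
    (q : EuclideanSpace ℝ (Fin m))
    (hqmem : G x + toE (H.mulVec (q - x)) = 0)
    (hqmin : ∀ w : EuclideanSpace ℝ (Fin m), G x + toE (H.mulVec (w - x)) = 0 →
      ‖zbar - q‖ ≤ ‖zbar - w‖) :
    ‖zbar - q‖ ≤ Ω * ‖G x - toE (H.mulVec (x - zbar))‖ :=
  stmt_13_general G x H hrank Ω hΩ zbar q hqmin
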